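/- If ψ ∈ G is the block matrix determined by the data (M, x, w, α, β) as in the definition of G, then for every s ∈ ℝ the matrix ψ_s determined by the data (M, s·x, s·w, α, β) also lies in G; in particular ψ_s ∈ Sp(2n,ℝ) for every s, and det(ψ_s − I_{2n}) = det(ψ − I_{2n}) for every s ∈ ℝ. -/

import Mathlib

open Matrix

/-- The standard symplectic matrix `J_{2k}`: the `2k × 2k` block-diagonal matrix consisting of
`k` copies of the `2 × 2` block `[[0,-1],[1,0]]`. -/
def Jstd (k : ℕ) : Matrix (Fin (2 * k)) (Fin (2 * k)) ℝ :=
  Matrix.of fun i j =>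
    if i.val = j.val + 1 ∧ j.val % 2 = 0 then 1
    else if j.val = i.val + 1 ∧ i.val % 2 = 0 then -1
    else 0

/-- `J_{2n}` on the index set `Fin (2m) ⊕ Fin 2` (so `2n = 2m + 2`). -/
def Jsum (m : ℕ) : Matrix (Fin (2 * m) ⊕ Fin 2) (Fin (2 * m) ⊕ Fin 2) ℝ :=
  Matrix.fromBlocks (Jstd m) 0 0 !![0, -1; 1, 0]

/-- The `(2m) × 2` block with prescribed first column and zero second column. -/
def colB (m : ℕ) (x : Fin (2 * m) → ℝ) : Matrix (Fin (2 * m)) (Fin 2) ℝ :=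
  Matrix.of fun i j => if j = 0 then x i else 0

/-- The `2 × (2m)` block with zero first row and prescribed second row. -/
def rowC (m : ℕ) (w : Fin (2 * m) → ℝ) : Matrix (Fin 2) (Fin (2 * m)) ℝ :=
  Matrix.of fun i j => if i = 1 then w j else 0

/-- The block matrix in `G` determined by the data `(M, x, w, α, β)`. -/
noncomputable def mkG (m : ℕ) (M : Matrix (Fin (2 * m)) (Fin (2 * m)) ℝ) (x w : Fin (2 * m) → ℝ)
    (α β : ℝ) : Matrix (Fin (2 * m) ⊕ Fin 2) (Fin (2 * m) ⊕ Fin 2) ℝ :=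
  Matrix.fromBlocks M (colB m x) (rowC m w) !![α, 0; β, α⁻¹]

/-- The set `G`: block matrices `[[M,B],[C,D]]` with `M ∈ Sp(2m, ℝ)`, `B` having first column
`x = (x₁,y₁,…)ᵀ` and second column `0`, `C` having first row `0` and second row `w`,
`D = [[α,0],[β,α⁻¹]]` with `α > 0`, subject to `(−y₁,x₁,…,−y_m,x_m)·M + α·w = 0`; note that
`(−y₁,x₁,…,−y_m,x_m) = J_{2m}·x` for `x = (x₁,y₁,…,x_m,y_m)`. -/
def GSet (m : ℕ) : Set (Matrix (Fin (2 * m) ⊕ Fin 2) (Fin (2 * m) ⊕ Fin 2) ℝ) :=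
  { ψ | ∃ (M : Matrix (Fin (2 * m)) (Fin (2 * m)) ℝ) (x w : Fin (2 * m) → ℝ) (α β : ℝ),
      Mᵀ * Jstd m * M = Jstd m ∧ 0 < α ∧
      Matrix.vecMul ((Jstd m).mulVec x) M + α • w = 0 ∧
      ψ = mkG m M x w α β }

/-! ### Auxiliary lemmas -/

/-- The `2 × (2m)` block with prescribed first row and zero second row. -/
def rowT (m : ℕ) (v : Fin (2 * m) → ℝ) : Matrix (Fin 2) (Fin (2 * m)) ℝ :=
  Matrix.of fun i j => if i = 0 then v j else 0

lemma Jstd_transpose (m : ℕ) : (Jstd m)ᵀ = -Jstd m := by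
  ext i j
  simp only [transpose_apply, Jstd, Matrix.of_apply, Matrix.neg_apply]
  split_ifs <;> try ring
  all_goals (exfalso; omega)

lemma dot_Jstd_self (m : ℕ) (x : Fin (2 * m) → ℝ) : x ⬝ᵥ (Jstd m) *ᵥ x = 0 := by
  have h : x ⬝ᵥ (Jstd m) *ᵥ x = ((Jstd m)ᵀ *ᵥ x) ⬝ᵥ x := by
    rw [dotProduct_mulVec, mulVec_transpose]
  rw [Jstd_transpose, neg_mulVec, neg_dotProduct] at h
  have h2 := dotProduct_comm (Jstd m *ᵥ x) x
  linarith

lemma rowC_transpose_mul_J2 (m : ℕ) (w : Fin (2 * m) → ℝ) :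
    (rowC m w)ᵀ * !![(0:ℝ), -1; 1, 0] = colB m w := by
  ext i j
  fin_cases j <;>
    simp [mul_apply, Fin.sum_univ_two, rowC, colB]

lemma mul_colB (m : ℕ) (A : Matrix (Fin (2 * m)) (Fin (2 * m)) ℝ) (v : Fin (2 * m) → ℝ) :
    A * colB m v = colB m (A *ᵥ v) := by
  ext i j
  by_cases h : j = 0 <;>
    simp [mul_apply, colB, mulVec, dotProduct, h]

lemma colB_mul_D (m : ℕ) (v : Fin (2 * m) → ℝ) (a b c : ℝ) :
    colB m v * !![a, (0:ℝ); b, c] = colB m (a • v) := by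
  ext i j
  fin_cases j <;>
    simp [mul_apply, Fin.sum_univ_two, colB, mul_comm]

lemma colB_mul_rowC (m : ℕ) (v w : Fin (2 * m) → ℝ) :
    colB m v * rowC m w = 0 := by
  ext i j
  simp [mul_apply, Fin.sum_univ_two, colB, rowC]

lemma colB_transpose_mul (m : ℕ) (v : Fin (2 * m) → ℝ) (A : Matrix (Fin (2 * m)) (Fin (2 * m)) ℝ) :
    (colB m v)ᵀ * A = rowT m (v ᵥ* A) := by
  ext i j
  by_cases h : i = 0 <;>
    simp [mul_apply, colB, rowT, vecMul, dotProduct, h]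

lemma rowT_mul (m : ℕ) (v : Fin (2 * m) → ℝ) (A : Matrix (Fin (2 * m)) (Fin (2 * m)) ℝ) :
    rowT m v * A = rowT m (v ᵥ* A) := by
  ext i j
  by_cases h : i = 0 <;>
    simp [mul_apply, rowT, vecMul, dotProduct, h]

lemma rowT_mul_colB (m : ℕ) (v x : Fin (2 * m) → ℝ) :
    rowT m v * colB m x = !![v ⬝ᵥ x, 0; 0, 0] := by
  ext i j
  fin_cases i <;> fin_cases j <;>
    simp [mul_apply, rowT, colB, dotProduct]

lemma mul_rowC (m : ℕ) (a b c : ℝ) (w : Fin (2 * m) → ℝ) :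
    (!![a, b; c, (0:ℝ)]) * rowC m w = rowT m (b • w) := by
  ext i j
  fin_cases i <;>
    simp [mul_apply, Fin.sum_univ_two, rowC, rowT]

lemma colB_add (m : ℕ) (u v : Fin (2 * m) → ℝ) :
    colB m u + colB m v = colB m (u + v) := by
  ext i j
  by_cases h : j = 0 <;> simp [colB, h]

lemma colB_zero (m : ℕ) : colB m 0 = 0 := by
  ext i j
  simp [colB]

lemma rowT_add (m : ℕ) (u v : Fin (2 * m) → ℝ) :
    rowT m u + rowT m v = rowT m (u + v) := by
  ext i j
  by_cases h : i = 0 <;> simp [rowT, h]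

lemma rowT_zero (m : ℕ) : rowT m 0 = 0 := by
  ext i j
  simp [rowT]

lemma colB_mul_mid_mul_rowC (m : ℕ) (x w : Fin (2 * m) → ℝ) (Z : Matrix (Fin 2) (Fin 2) ℝ)
    (hZ : Z 0 1 = 0) : colB m x * Z * rowC m w = 0 := by
  ext i j
  simp [mul_apply, Fin.sum_univ_two, colB, rowC, hZ]

lemma transpose_D (α β : ℝ) : (!![α, 0; β, α⁻¹])ᵀ = !![α, β; 0, α⁻¹] := by
  ext i j
  fin_cases i <;> fin_cases j <;> simp

lemma fromBlocks_sub' {l m n o : Type*} (A A' : Matrix n l ℝ) (B B' : Matrix n m ℝ)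
    (C C' : Matrix o l ℝ) (D D' : Matrix o m ℝ) :
    fromBlocks A B C D - fromBlocks A' B' C' D' =
      fromBlocks (A - A') (B - B') (C - C') (D - D') := by
  ext (i | i) (j | j) <;> simp [fromBlocks]

/-- The symplectic condition for `mkG`. -/
lemma mkG_symp (m : ℕ) (M : Matrix (Fin (2 * m)) (Fin (2 * m)) ℝ) (x w : Fin (2 * m) → ℝ)
    (α β : ℝ) (hM : Mᵀ * Jstd m * M = Jstd m) (hα : α ≠ 0)
    (hrel : Matrix.vecMul ((Jstd m).mulVec x) M + α • w = 0) :
    (mkG m M x w α β)ᵀ * Jsum m * mkG m M x w α β = Jsum m := by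
  rw [mkG, Jsum, fromBlocks_transpose, fromBlocks_multiply, fromBlocks_multiply]
  simp only [Matrix.mul_zero, Matrix.zero_mul, add_zero, zero_add]
  rw [fromBlocks_inj]
  have hDtJ2 : (!![α, 0; β, α⁻¹])ᵀ * !![(0:ℝ), -1; 1, 0] = !![β, -α; α⁻¹, 0] := by
    ext i j
    fin_cases i <;> fin_cases j <;>
      simp [transpose_D, mul_apply, Fin.sum_univ_two, Matrix.vecHead, Matrix.vecTail]
  refine ⟨?_, ?_, ?_, ?_⟩
  · -- top-left
    rw [rowC_transpose_mul_J2, colB_mul_rowC, add_zero, hM]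
  · -- top-right
    rw [rowC_transpose_mul_J2, mul_colB, colB_mul_D, colB_add]
    have : (Mᵀ * Jstd m) *ᵥ x + α • w = 0 := by
      rw [← mulVec_mulVec, mulVec_transpose]
      exact hrel
    rw [this, colB_zero]
  · -- bottom-left
    rw [colB_transpose_mul, rowT_mul, hDtJ2, mul_rowC, rowT_add]
    have hv : x ᵥ* Jstd m = -((Jstd m) *ᵥ x) := by
      rw [← mulVec_transpose, Jstd_transpose, neg_mulVec]
    have : (x ᵥ* Jstd m) ᵥ* M + (-α) • w = 0 := by
      rw [hv, neg_vecMul, neg_smul, ← neg_add, hrel, neg_zero]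
    rw [this, rowT_zero]
  · -- bottom-right
    rw [colB_transpose_mul, rowT_mul_colB, hDtJ2, mul_fin_two]
    have h1 : (x ᵥ* Jstd m) ⬝ᵥ x = 0 := by
      rw [← dotProduct_mulVec]; exact dot_Jstd_self m x
    rw [h1]
    have h2 : (!![(0:ℝ), 0; 0, 0]) = 0 := by
      ext i j; fin_cases i <;> fin_cases j <;> simp
    rw [h2, zero_add]
    have h3 : α⁻¹ * α = 1 := inv_mul_cancel₀ hα
    have h4 : α * α⁻¹ = 1 := mul_inv_cancel₀ hα
    ext i j
    fin_cases i <;> fin_cases j <;> simp <;> nlinarith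

/-- The determinant formula for `mkG - 1`. -/
lemma det_mkG_sub_one (m : ℕ) (M : Matrix (Fin (2 * m)) (Fin (2 * m)) ℝ) (x w : Fin (2 * m) → ℝ)
    (α β : ℝ) (hα : α ≠ 0) :
    (mkG m M x w α β - 1).det = (α - 1) * (α⁻¹ - 1) * (M - 1).det := by
  have hsub : mkG m M x w α β - 1 =
      fromBlocks (M - 1) (colB m x) (rowC m w) !![α - 1, 0; β, α⁻¹ - 1] := by
    have hD : !![α, 0; β, α⁻¹] - 1 = !![α - 1, 0; β, α⁻¹ - 1] := by
      rw [one_fin_two]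
      ext i j
      fin_cases i <;> fin_cases j <;>
        simp [Matrix.sub_apply, Matrix.vecHead, Matrix.vecTail]
    rw [mkG, ← fromBlocks_one, fromBlocks_sub', sub_zero, sub_zero, hD]
  rw [hsub]
  by_cases h1 : α = 1
  · subst h1
    rw [inv_one]
    simp only [sub_self, zero_mul, mul_zero]
    apply det_eq_zero_of_row_eq_zero (Sum.inr 0)
    rintro (j | j)
    · simp [fromBlocks, rowC]
    · fin_cases j <;> simp [fromBlocks]
  · have hc : α⁻¹ - 1 ≠ 0 := by
      intro h
      exact h1 (inv_eq_one.mp (by linarith [sub_eq_zero.mp h]))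
    have ha : α - 1 ≠ 0 := sub_ne_zero.mpr h1
    have hdet : (!![α - 1, (0:ℝ); β, α⁻¹ - 1]).det = (α - 1) * (α⁻¹ - 1) := by
      rw [det_fin_two_of]; ring
    have : Invertible (!![α - 1, (0:ℝ); β, α⁻¹ - 1]) := by
      apply invertibleOfIsUnitDet
      rw [hdet]
      exact ((isUnit_iff_ne_zero.mpr ha).mul (isUnit_iff_ne_zero.mpr hc))
    rw [det_fromBlocks₂₂]
    have hZ : (⅟(!![α - 1, (0:ℝ); β, α⁻¹ - 1])) 0 1 = 0 := by
      rw [invOf_eq_nonsing_inv, Matrix.inv_def, adjugate_fin_two]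
      simp
    rw [colB_mul_mid_mul_rowC m x w _ hZ, sub_zero, hdet]

/-- If `ψ ∈ G` is the block matrix determined by the data `(M, x, w, α, β)`, then for every
`s ∈ ℝ` the matrix `ψ_s` determined by `(M, s·x, s·w, α, β)` also lies in `G`; in particular
`ψ_s ∈ Sp(2n, ℝ)` for every `s`, and `det(ψ_s − I) = det(ψ − I)` for every `s ∈ ℝ`. -/
theorem scaled_offdiagonal_stays_in_G (n : ℕ) (hn : 2 ≤ n)
    (M : Matrix (Fin (2 * (n - 1))) (Fin (2 * (n - 1))) ℝ)
    (x w : Fin (2 * (n - 1)) → ℝ) (α β : ℝ)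
    (hM : Mᵀ * Jstd (n - 1) * M = Jstd (n - 1)) (hα : 0 < α)
    (hrel : Matrix.vecMul ((Jstd (n - 1)).mulVec x) M + α • w = 0) :
    ∀ s : ℝ,
      mkG (n - 1) M (s • x) (s • w) α β ∈ GSet (n - 1) ∧
      (mkG (n - 1) M (s • x) (s • w) α β)ᵀ * Jsum (n - 1) * mkG (n - 1) M (s • x) (s • w) α β
        = Jsum (n - 1) ∧
      (mkG (n - 1) M (s • x) (s • w) α β - 1).det = (mkG (n - 1) M x w α β - 1).det := by
  intro s
  have hrel_s : Matrix.vecMul ((Jstd (n - 1)).mulVec (s • x)) M + α • (s • w) = 0 := by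
    rw [mulVec_smul, smul_vecMul, smul_comm α s w, ← smul_add, hrel, smul_zero]
  refine ⟨⟨M, s • x, s • w, α, β, hM, hα, hrel_s, rfl⟩,
    mkG_symp _ M _ _ α β hM hα.ne' hrel_s, ?_⟩
  rw [det_mkG_sub_one _ M _ _ α β hα.ne', det_mkG_sub_one _ M x w α β hα.ne']
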